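/- arXiv:1403.2991 — 4 statements merged into one kernel-verified Lean document; each statement's English description precedes it below -/
import Mathlib

section
/- Let A be an ε-compatible family of affine maps over E ⊂ ℝⁿ. Then for every x ∈ E, r > 0, and integer k ≥ 0, the linear parts satisfy ‖A'_{x,r} − A'_{x,2^k r}‖ ≤ ((1+ε)^k − 1) · min(‖A'_{x,r}‖, ‖A'_{x,2^k r}‖). -/
/-!
Consecutive dyadic scales `2ʲr, 2ʲ⁺¹r` are compatible at the same point, so the linear parts
`Lⱼ := A'_{x,2ʲr}` satisfy `‖Lⱼ - Lⱼ₊₁‖ ≤ ε·min(‖Lⱼ‖, ‖Lⱼ₊₁‖)`. It suffices to bound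
`‖L₀ - Lₖ‖` separately by `((1+ε)ᵏ - 1)‖L₀‖` and by `((1+ε)ᵏ - 1)‖Lₖ‖`. The first follows by
induction on `k`, since `‖Lₖ‖ ≤ ‖L₀‖ + ‖L₀ - Lₖ‖ ≤ (1+ε)ᵏ‖L₀‖`; the second is the first applied
to the reversed chain `Lₖ, …, L₀`.
-/

open Metric

/-- A family `A = {A_{x,r}}` of affine maps `ℝⁿ → ℝᴺ` over `E ⊆ ℝⁿ` is `ε`-compatible if
`‖A'_{x,r} − A'_{y,s}‖ ≤ ε·min(‖A'_{x,r}‖, ‖A'_{y,s}‖)` whenever `x, y ∈ E`,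
`|x−y| ≤ max(r,s)`, and `1/2 ≤ r/s ≤ 2`, where `A'` is the linear part. -/
def IsCompatibleFamily (n N : ℕ) (E : Set (EuclideanSpace ℝ (Fin n)))
    (A : EuclideanSpace ℝ (Fin n) → ℝ →
      ContinuousAffineMap ℝ (EuclideanSpace ℝ (Fin n)) (EuclideanSpace ℝ (Fin N)))
    (ε : ℝ) : Prop :=
  ∀ x ∈ E, ∀ y ∈ E, ∀ r s : ℝ, 0 < r → 0 < s →
    dist x y ≤ max r s → 1 / 2 ≤ r / s → r / s ≤ 2 →
    ‖(A x r).contLinear - (A y s).contLinear‖ ≤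
      ε * min ‖(A x r).contLinear‖ ‖(A y s).contLinear‖

section ChainEstimates

variable {F : Type*} [SeminormedAddCommGroup F] {L : ℕ → F} {ε : ℝ} {k : ℕ}

theorem norm_sub_le_of_norm_sub_succ_le_mul_norm_left (hε : 0 ≤ ε)
    (h : ∀ j < k, ‖L j - L (j + 1)‖ ≤ ε * ‖L j‖) :
    ‖L 0 - L k‖ ≤ ((1 + ε) ^ k - 1) * ‖L 0‖ := by
  induction k with
  | zero => simp
  | succ k ih =>
    have ih := ih fun j hj => h j (by omega)
    have hstep := h k (Nat.lt_succ_self k)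
    have hLk : ‖L k‖ ≤ ‖L 0‖ + ‖L 0 - L k‖ := norm_le_norm_add_norm_sub (L 0) (L k)
    calc ‖L 0 - L (k + 1)‖ ≤ ‖L 0 - L k‖ + ‖L k - L (k + 1)‖ :=
          norm_sub_le_norm_sub_add_norm_sub _ _ _
      _ ≤ ‖L 0 - L k‖ + ε * (‖L 0‖ + ‖L 0 - L k‖) := by gcongr; exact hstep.trans (by gcongr)
      _ ≤ ((1 + ε) ^ k - 1) * ‖L 0‖ + ε * (‖L 0‖ + ((1 + ε) ^ k - 1) * ‖L 0‖) := by gcongr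
      _ = ((1 + ε) ^ (k + 1) - 1) * ‖L 0‖ := by ring

theorem norm_sub_le_of_norm_sub_succ_le_mul_norm_right (hε : 0 ≤ ε)
    (h : ∀ j < k, ‖L j - L (j + 1)‖ ≤ ε * ‖L (j + 1)‖) :
    ‖L 0 - L k‖ ≤ ((1 + ε) ^ k - 1) * ‖L k‖ := by
  have hrev := norm_sub_le_of_norm_sub_succ_le_mul_norm_left
    (L := fun j => L (k - j)) (k := k) hε fun j hj => by
      have hkj : k - j = k - (j + 1) + 1 := by omega
      simpa only [hkj, norm_sub_rev (L (k - (j + 1) + 1))] using h (k - (j + 1)) (by omega)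
  simpa [norm_sub_rev] using hrev

theorem norm_sub_le_of_norm_sub_succ_le_mul_min (hε : 0 ≤ ε)
    (h : ∀ j < k, ‖L j - L (j + 1)‖ ≤ ε * min ‖L j‖ ‖L (j + 1)‖) :
    ‖L 0 - L k‖ ≤ ((1 + ε) ^ k - 1) * min ‖L 0‖ ‖L k‖ := by
  rw [mul_min_of_nonneg _ _ (sub_nonneg.2 (one_le_pow₀ (by linarith)))]
  exact le_min
    (norm_sub_le_of_norm_sub_succ_le_mul_norm_left hε fun j hj =>
      (h j hj).trans (by gcongr; exact min_le_left _ _))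
    (norm_sub_le_of_norm_sub_succ_le_mul_norm_right hε fun j hj =>
      (h j hj).trans (by gcongr; exact min_le_right _ _))

end ChainEstimates

theorem IsCompatibleFamily.norm_contLinear_sub_two_mul_le {n N : ℕ}
    {E : Set (EuclideanSpace ℝ (Fin n))}
    {A : EuclideanSpace ℝ (Fin n) → ℝ →
      ContinuousAffineMap ℝ (EuclideanSpace ℝ (Fin n)) (EuclideanSpace ℝ (Fin N))}
    {ε : ℝ} (hA : IsCompatibleFamily n N E A ε) {x : EuclideanSpace ℝ (Fin n)} (hx : x ∈ E)
    {r : ℝ} (hr : 0 < r) :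
    ‖(A x r).contLinear - (A x (2 * r)).contLinear‖ ≤
      ε * min ‖(A x r).contLinear‖ ‖(A x (2 * r)).contLinear‖ := by
  have hratio : r / (2 * r) = 1 / 2 := by field_simp
  exact hA x hx x hx r (2 * r) hr (by positivity) (by rw [dist_self]; positivity) hratio.ge
    (by rw [hratio]; norm_num)

/-- If `A` is an `ε`-compatible family over `E`, then for every `x ∈ E`,
`r > 0`, and `k ≥ 0`, `‖A'_{x,r} − A'_{x,2^k r}‖ ≤ ((1+ε)^k − 1)·min(‖A'_{x,r}‖, ‖A'_{x,2^k r}‖)`. -/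
theorem compatible_family_dyadic_estimate (n N : ℕ) (E : Set (EuclideanSpace ℝ (Fin n)))
    (A : EuclideanSpace ℝ (Fin n) → ℝ →
      ContinuousAffineMap ℝ (EuclideanSpace ℝ (Fin n)) (EuclideanSpace ℝ (Fin N)))
    (ε : ℝ) (hε : 0 < ε) (hA : IsCompatibleFamily n N E A ε) :
    ∀ x ∈ E, ∀ r : ℝ, 0 < r → ∀ k : ℕ,
      ‖(A x r).contLinear - (A x (2 ^ k * r)).contLinear‖ ≤
        ((1 + ε) ^ k - 1) *
          min ‖(A x r).contLinear‖ ‖(A x (2 ^ k * r)).contLinear‖ := by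
  intro x hx r hr k
  have hchain := norm_sub_le_of_norm_sub_succ_le_mul_min
    (L := fun j => (A x (2 ^ j * r)).contLinear) (k := k) hε.le fun j _ => by
      simpa only [pow_succ, mul_comm _ (2 : ℝ), mul_assoc] using
        hA.norm_contLinear_sub_two_mul_le hx (by positivity : 0 < 2 ^ j * r)
  simpa using hchain
end

section
/- There is an absolute constant ε̂ = √2 − 1 such that: if (f, E, A) is ε-almost affine for some ε < ε̂, then with θ = 1 − 2 log₂(1+ε) ∈ (0,1), for every x₀ ∈ E, r₀ > 0 and all x, y ∈ E ∩ B(x₀, r₀/2), |f(x) − f(y)| ≤ (4/(θ log 2)) · (|x−y|/r₀)^{(1−ε)θ} · ‖A'_{x₀,r₀}‖ · r₀. In particular f|_E is locally Hölder continuous with exponent (1−ε)θ → 1 as ε → 0. -/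
open Metric

/-- `(f, E, A)` is `ε`-almost affine: `A` is an `ε`-compatible family over `E` and
`|f z − A_{x,r} z| ≤ ε‖A'_{x,r}‖r` for all `z ∈ E ∩ B(x,r)`, `x ∈ E`, `r > 0`. -/
def IsAlmostAffine (n N : ℕ) (f : EuclideanSpace ℝ (Fin n) → EuclideanSpace ℝ (Fin N))
    (E : Set (EuclideanSpace ℝ (Fin n)))
    (A : EuclideanSpace ℝ (Fin n) → ℝ →
      ContinuousAffineMap ℝ (EuclideanSpace ℝ (Fin n)) (EuclideanSpace ℝ (Fin N)))
    (ε : ℝ) : Prop :=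
  IsCompatibleFamily n N E A ε ∧
  ∀ x ∈ E, ∀ r : ℝ, 0 < r → ∀ z ∈ E ∩ closedBall x r,
    dist (f z) ((A x r) z) ≤ ε * ‖(A x r).contLinear‖ * r

/-! At the dyadic scale `r = r₀ / 2 ^ k` comparable to `|x - y|`, the almost-affine bound at `x`
gives `|f x - f y| ≤ (1 + 4ε) ‖A'_{x,r}‖ |x - y|`. Compatibility lets the slope grow by at most a
factor `1 + ε` per halving of the scale, so
`‖A'_{x,r}‖ ≤ (1 + ε) ^ (k + 1) ‖A'_{x₀,r₀}‖ ≤ (1 + ε) (r₀ / |x - y|) ^ log₂(1 + ε) ‖A'_{x₀,r₀}‖`.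
This is a Hölder bound with exponent `1 - log₂(1 + ε) ≥ (1 - ε) θ` and constant
`(1 + ε)(1 + 4ε) ≤ 4 / (θ log 2)`. -/

theorem ContinuousAffineMap.dist_map_le {𝕜 V W : Type*} [NontriviallyNormedField 𝕜]
    [NormedAddCommGroup V] [NormedSpace 𝕜 V] [NormedAddCommGroup W] [NormedSpace 𝕜 W]
    (F : V →ᴬ[𝕜] W) (x y : V) : dist (F x) (F y) ≤ ‖F.contLinear‖ * dist x y := by
  rw [dist_eq_norm, dist_eq_norm, ← vsub_eq_sub, ← F.contLinear_map_vsub, vsub_eq_sub]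
  exact F.contLinear.le_opNorm _

theorem Real.logb_two_lt_half {a : ℝ} (ha : 0 < a) (h : a < √2) : Real.logb 2 a < 1 / 2 := by
  have := Real.logb_lt_logb one_lt_two ha h
  rwa [Real.sqrt_eq_rpow, Real.logb_rpow two_pos (by norm_num)] at this

theorem Real.pow_le_rpow_logb {a b t : ℝ} {k : ℕ} (ha : 1 ≤ a) (hb : 1 < b) (hbt : b ^ k ≤ t) :
    a ^ k ≤ t ^ Real.logb b a := by
  have hb0 : 0 < b := one_pos.trans hb
  calc a ^ k = (b ^ k) ^ Real.logb b a := by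
        rw [← Real.rpow_natCast, ← Real.rpow_natCast, ← Real.rpow_mul hb0.le, mul_comm,
          Real.rpow_mul hb0.le, Real.rpow_logb hb0 hb.ne' (one_pos.trans_le ha)]
    _ ≤ t ^ Real.logb b a := by
        gcongr
        exact Real.logb_nonneg hb ha

theorem dist_le_of_mem_closedBall_half {α : Type*} [PseudoMetricSpace α] {x₀ x y : α} {r : ℝ}
    (hx : x ∈ closedBall x₀ (r / 2)) (hy : y ∈ closedBall x₀ (r / 2)) : dist x y ≤ r := by
  linarith [dist_triangle_right x y x₀, mem_closedBall.mp hx, mem_closedBall.mp hy]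

namespace IsCompatibleFamily

variable {n N : ℕ} {E : Set (EuclideanSpace ℝ (Fin n))}
  {A : EuclideanSpace ℝ (Fin n) → ℝ →
    ContinuousAffineMap ℝ (EuclideanSpace ℝ (Fin n)) (EuclideanSpace ℝ (Fin N))}
  {ε : ℝ}

theorem norm_contLinear_le (hA : IsCompatibleFamily n N E A ε) (hε : 0 ≤ ε)
    {x y : EuclideanSpace ℝ (Fin n)} (hx : x ∈ E) (hy : y ∈ E) {r s : ℝ} (hr : 0 < r)
    (hs : 0 < s) (hxy : dist x y ≤ max r s) (hrs : 1 / 2 ≤ r / s) (hrs' : r / s ≤ 2) :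
    ‖(A x r).contLinear‖ ≤ (1 + ε) * ‖(A y s).contLinear‖ := by
  have hdiff := (hA x hx y hy r s hr hs hxy hrs hrs').trans
    (mul_le_mul_of_nonneg_left (min_le_right _ _) hε)
  linarith [norm_le_norm_add_norm_sub' (A x r).contLinear (A y s).contLinear]

theorem norm_contLinear_div_two_pow_le (hA : IsCompatibleFamily n N E A ε) (hε : 0 ≤ ε)
    {x : EuclideanSpace ℝ (Fin n)} (hx : x ∈ E) {r : ℝ} (hr : 0 < r) (k : ℕ) :
    ‖(A x (r / 2 ^ k)).contLinear‖ ≤ (1 + ε) ^ k * ‖(A x r).contLinear‖ := by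
  induction k with
  | zero => simp
  | succ k ih =>
    have hratio : r / 2 ^ (k + 1) / (r / 2 ^ k) = 1 / 2 := by field_simp; ring
    calc ‖(A x (r / 2 ^ (k + 1))).contLinear‖
        ≤ (1 + ε) * ‖(A x (r / 2 ^ k)).contLinear‖ :=
          hA.norm_contLinear_le hε hx hx (by positivity) (by positivity)
            (by rw [dist_self]; positivity) hratio.ge (by rw [hratio]; norm_num)
      _ ≤ (1 + ε) * ((1 + ε) ^ k * ‖(A x r).contLinear‖) := by gcongr
      _ = (1 + ε) ^ (k + 1) * ‖(A x r).contLinear‖ := by ring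

end IsCompatibleFamily

namespace IsAlmostAffine

variable {n N : ℕ} {f : EuclideanSpace ℝ (Fin n) → EuclideanSpace ℝ (Fin N)}
  {E : Set (EuclideanSpace ℝ (Fin n))}
  {A : EuclideanSpace ℝ (Fin n) → ℝ →
    ContinuousAffineMap ℝ (EuclideanSpace ℝ (Fin n)) (EuclideanSpace ℝ (Fin N))}
  {ε : ℝ}

theorem dist_le (hf : IsAlmostAffine n N f E A ε) {x y : EuclideanSpace ℝ (Fin n)}
    (hx : x ∈ E) (hy : y ∈ E) {r : ℝ} (hr : 0 < r) (hxy : dist x y ≤ r) :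
    dist (f x) (f y) ≤ ‖(A x r).contLinear‖ * (2 * ε * r + dist x y) := by
  have hfx := hf.2 x hx r hr x ⟨hx, mem_closedBall_self hr.le⟩
  have hfy := hf.2 x hx r hr y ⟨hy, mem_closedBall'.mpr hxy⟩
  calc dist (f x) (f y)
      ≤ dist (f x) (A x r x) + dist (A x r x) (A x r y) + dist (A x r y) (f y) :=
        dist_triangle4 _ _ _ _
    _ ≤ ε * ‖(A x r).contLinear‖ * r + ‖(A x r).contLinear‖ * dist x y +
          ε * ‖(A x r).contLinear‖ * r := by
        gcongr
        · exact (A x r).dist_map_le x y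
        · rwa [dist_comm]
    _ = ‖(A x r).contLinear‖ * (2 * ε * r + dist x y) := by ring

theorem dist_le_of_dyadic_scale (hf : IsAlmostAffine n N f E A ε) (hε : 0 ≤ ε)
    {x₀ x y : EuclideanSpace ℝ (Fin n)} (hx₀ : x₀ ∈ E) (hx : x ∈ E) (hy : y ∈ E) {r₀ : ℝ}
    (hr₀ : 0 < r₀) (hxx₀ : dist x x₀ ≤ r₀) {k : ℕ} (hk : dist x y ≤ r₀ / 2 ^ k)
    (hk' : r₀ / 2 ^ k ≤ 2 * dist x y) :
    dist (f x) (f y) ≤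
      (1 + ε) ^ (k + 1) * ‖(A x₀ r₀).contLinear‖ * ((1 + 4 * ε) * dist x y) := by
  have hr : 0 < r₀ / 2 ^ k := by positivity
  have hr₀r₀ : r₀ / r₀ = 1 := div_self hr₀.ne'
  have hnorm : ‖(A x (r₀ / 2 ^ k)).contLinear‖ ≤
      (1 + ε) ^ (k + 1) * ‖(A x₀ r₀).contLinear‖ :=
    calc ‖(A x (r₀ / 2 ^ k)).contLinear‖
        ≤ (1 + ε) ^ k * ‖(A x r₀).contLinear‖ :=
          hf.1.norm_contLinear_div_two_pow_le hε hx hr₀ k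
      _ ≤ (1 + ε) ^ k * ((1 + ε) * ‖(A x₀ r₀).contLinear‖) := by
          gcongr
          exact hf.1.norm_contLinear_le hε hx hx₀ hr₀ hr₀ (by rwa [max_self])
            (by rw [hr₀r₀]; norm_num) (by rw [hr₀r₀]; norm_num)
      _ = (1 + ε) ^ (k + 1) * ‖(A x₀ r₀).contLinear‖ := by ring
  calc dist (f x) (f y)
      ≤ ‖(A x (r₀ / 2 ^ k)).contLinear‖ * (2 * ε * (r₀ / 2 ^ k) + dist x y) :=
        hf.dist_le hx hy hr hk
    _ ≤ (1 + ε) ^ (k + 1) * ‖(A x₀ r₀).contLinear‖ * ((1 + 4 * ε) * dist x y) :=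
        mul_le_mul hnorm (by nlinarith) (by positivity) (by positivity)

theorem dist_le_rpow (hf : IsAlmostAffine n N f E A ε) (hε : 0 ≤ ε)
    {x₀ x y : EuclideanSpace ℝ (Fin n)} (hx₀ : x₀ ∈ E) {r₀ : ℝ} (hr₀ : 0 < r₀)
    (hx : x ∈ E ∩ closedBall x₀ (r₀ / 2)) (hy : y ∈ E ∩ closedBall x₀ (r₀ / 2)) :
    dist (f x) (f y) ≤ (1 + ε) * (1 + 4 * ε) * (dist x y / r₀) ^ (1 - Real.logb 2 (1 + ε)) *
      ‖(A x₀ r₀).contLinear‖ * r₀ := by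
  obtain ⟨hxE, hxB⟩ := hx
  obtain ⟨hyE, hyB⟩ := hy
  rcases (dist_nonneg : 0 ≤ dist x y).eq_or_lt with hxy | hxy
  · rw [dist_eq_zero.mp hxy.symm, dist_self]
    positivity
  obtain ⟨k, hk, hk'⟩ :=
    exists_nat_pow_near ((one_le_div hxy).mpr (dist_le_of_mem_closedBall_half hxB hyB)) one_lt_two
  have h2k : (0 : ℝ) < 2 ^ k := by positivity
  have hscale := hf.dist_le_of_dyadic_scale hε hx₀ hxE hyE hr₀
    ((mem_closedBall.mp hxB).trans (by linarith))
    (by rwa [le_div_iff₀ h2k, ← le_div_iff₀' hxy])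
    (by rw [div_lt_iff₀ hxy, pow_succ] at hk'; rw [div_le_iff₀ h2k]; linarith)
  set β := Real.logb 2 (1 + ε)
  have hpow : (1 + ε) ^ k ≤ (r₀ / dist x y) ^ β :=
    Real.pow_le_rpow_logb (by linarith) one_lt_two hk
  have hrpow : (r₀ / dist x y) ^ β * dist x y = (dist x y / r₀) ^ (1 - β) * r₀ := by
    rw [Real.rpow_sub (by positivity), Real.rpow_one, Real.div_rpow hr₀.le hxy.le,
      Real.div_rpow hxy.le hr₀.le]
    field_simp
  calc dist (f x) (f y)
      ≤ (1 + ε) ^ (k + 1) * ‖(A x₀ r₀).contLinear‖ * ((1 + 4 * ε) * dist x y) := hscale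
    _ ≤ (1 + ε) * (r₀ / dist x y) ^ β * ‖(A x₀ r₀).contLinear‖ * ((1 + 4 * ε) * dist x y) := by
        rw [pow_succ']
        gcongr
    _ = (1 + ε) * (1 + 4 * ε) * (dist x y / r₀) ^ (1 - β) * ‖(A x₀ r₀).contLinear‖ * r₀ := by
        linear_combination ((1 + ε) * (1 + 4 * ε) * ‖(A x₀ r₀).contLinear‖) * hrpow

end IsAlmostAffine

theorem one_add_mul_one_add_four_mul_le {ε θ : ℝ} (hε0 : 0 ≤ ε) (hε : ε < 1 / 2)
    (hθ0 : 0 < θ) (hθ : θ ≤ 1) : (1 + ε) * (1 + 4 * ε) ≤ 4 / (θ * Real.log 2) := by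
  have hlog2 := Real.log_two_lt_d9
  rw [le_div_iff₀ (by positivity)]
  calc (1 + ε) * (1 + 4 * ε) * (θ * Real.log 2)
      ≤ (1 + 1 / 2) * (1 + 4 * (1 / 2)) * (1 * 0.7) := by
        gcongr
        linarith
    _ ≤ 4 := by norm_num

/-- If `(f,E,A)` is `ε`-almost affine with `0 < ε < √2 − 1`, then with
`θ = 1 − 2 log₂(1+ε) ∈ (0,1)`, for all `x₀ ∈ E`, `r₀ > 0` and `x, y ∈ E ∩ B(x₀, r₀/2)`:
`|f x − f y| ≤ (4/(θ log 2))·(|x−y|/r₀)^{(1−ε)θ}·‖A'_{x₀,r₀}‖·r₀`; in particular `f|_E` is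
locally Hölder continuous with exponent `(1−ε)θ`. -/
theorem almostAffine_holder (n N : ℕ) (f : EuclideanSpace ℝ (Fin n) → EuclideanSpace ℝ (Fin N))
    (E : Set (EuclideanSpace ℝ (Fin n)))
    (A : EuclideanSpace ℝ (Fin n) → ℝ →
      ContinuousAffineMap ℝ (EuclideanSpace ℝ (Fin n)) (EuclideanSpace ℝ (Fin N)))
    (ε : ℝ) (hε0 : 0 < ε) (hε : ε < Real.sqrt 2 - 1)
    (hfa : IsAlmostAffine n N f E A ε) :
    (0 < 1 - 2 * Real.logb 2 (1 + ε) ∧ 1 - 2 * Real.logb 2 (1 + ε) < 1) ∧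
    ∀ x₀ ∈ E, ∀ r₀ : ℝ, 0 < r₀ → ∀ x ∈ E ∩ closedBall x₀ (r₀ / 2),
      ∀ y ∈ E ∩ closedBall x₀ (r₀ / 2),
        dist (f x) (f y) ≤
          (4 / ((1 - 2 * Real.logb 2 (1 + ε)) * Real.log 2)) *
            (dist x y / r₀) ^ ((1 - ε) * (1 - 2 * Real.logb 2 (1 + ε))) *
            ‖(A x₀ r₀).contLinear‖ * r₀ := by
  have hβ0 : 0 < Real.logb 2 (1 + ε) := Real.logb_pos one_lt_two (by linarith)
  have hβ : Real.logb 2 (1 + ε) < 1 / 2 := Real.logb_two_lt_half (by linarith) (by linarith)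
  have hε2 : ε < 1 / 2 := by
    nlinarith [Real.sq_sqrt (zero_le_two : (0 : ℝ) ≤ 2), Real.sqrt_nonneg 2]
  refine ⟨⟨by linarith, by linarith⟩, fun x₀ hx₀ r₀ hr₀ x hx y hy => ?_⟩
  have hd : dist x y / r₀ ≤ 1 := (div_le_one hr₀).mpr (dist_le_of_mem_closedBall_half hx.2 hy.2)
  have hconst : (1 + ε) * (1 + 4 * ε) ≤ 4 / ((1 - 2 * Real.logb 2 (1 + ε)) * Real.log 2) :=
    one_add_mul_one_add_four_mul_le hε0.le hε2 (by linarith) (by linarith)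
  have hexp : (dist x y / r₀) ^ (1 - Real.logb 2 (1 + ε)) ≤
      (dist x y / r₀) ^ ((1 - ε) * (1 - 2 * Real.logb 2 (1 + ε))) :=
    Real.rpow_le_rpow_of_exponent_ge' (by positivity) hd
      (mul_nonneg (by linarith) (by linarith)) (by nlinarith)
  calc dist (f x) (f y)
      ≤ (1 + ε) * (1 + 4 * ε) * (dist x y / r₀) ^ (1 - Real.logb 2 (1 + ε)) *
          ‖(A x₀ r₀).contLinear‖ * r₀ := hfa.dist_le_rpow hε0.le hx₀ hr₀ hx hy
    _ ≤ (1 + ε) * (1 + 4 * ε) * (dist x y / r₀) ^ ((1 - ε) * (1 - 2 * Real.logb 2 (1 + ε))) *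
          ‖(A x₀ r₀).contLinear‖ * r₀ := by gcongr
    _ ≤ 4 / ((1 - 2 * Real.logb 2 (1 + ε)) * Real.log 2) *
          (dist x y / r₀) ^ ((1 - ε) * (1 - 2 * Real.logb 2 (1 + ε))) *
          ‖(A x₀ r₀).contLinear‖ * r₀ := by gcongr
end

section
/- Suppose (f, B(x,r), A) is ε-almost affine, λₙ(A'_{x,r}) ≤ H·λ₁(A'_{x,r}), and H(t + 2ε) ≤ 1 for some 0 < t < 1. Then ‖A'_{x,r}‖ r ≤ diam f(B(x,r)) ≤ 3 ‖A'_{x,r}‖ r, and t ‖A'_{x,r}‖ r ≤ |f(x) − f(y)| ≤ 2 ‖A'_{x,r}‖ r for all y with |y − x| = r. -/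
/-! On `B(x,r)` the map `f` stays within `δ = ε‖A'‖r` of the affine map `A = A_{x,r}`, so distances
between values of `f` differ from the corresponding distances for `A` by at most `2δ`, and so do the
diameters of the images. For `A` itself, `diam A(B(x,r)) = 2‖A'‖r` and `λ₁(A') r ≤ |A x − A y| ≤ ‖A'‖r`
when `|y − x| = r`. Since `H ≥ 1`, the hypothesis `H(t + 2ε) ≤ 1` gives both `2ε ≤ 1` and
`(t + 2ε)‖A'‖ ≤ λ₁(A')`, which absorb the error `2δ`. -/

open Metric

/-- The smallest singular value `λ₁(L)` of a linear map, characterized variationally as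
the infimum of `‖L v‖` over unit vectors `v`. (The largest singular value `λₙ(L)` is `‖L‖`.) -/
noncomputable def sigmaMin {n N : ℕ}
    (L : EuclideanSpace ℝ (Fin n) →L[ℝ] EuclideanSpace ℝ (Fin N)) : ℝ :=
  sInf {c : ℝ | ∃ v : EuclideanSpace ℝ (Fin n), ‖v‖ = 1 ∧ c = ‖L v‖}

section CloseMaps

variable {α β : Type*} [PseudoMetricSpace β] {f g : α → β} {S : Set α} {δ : ℝ}

theorem abs_dist_sub_dist_le_of_forall_dist_le (hfg : ∀ z ∈ S, dist (f z) (g z) ≤ δ)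
    {z w : α} (hz : z ∈ S) (hw : w ∈ S) :
    |dist (f z) (f w) - dist (g z) (g w)| ≤ 2 * δ :=
  calc |dist (f z) (f w) - dist (g z) (g w)|
      ≤ dist (f z) (g z) + dist (f w) (g w) := by
        simpa only [Real.dist_eq] using dist_dist_dist_le (f z) (f w) (g z) (g w)
    _ ≤ 2 * δ := by linarith [hfg z hz, hfg w hw]

theorem isBounded_image_of_forall_dist_le (hg : Bornology.IsBounded (g '' S))
    (hfg : ∀ z ∈ S, dist (f z) (g z) ≤ δ) : Bornology.IsBounded (f '' S) := by
  obtain ⟨C, hC⟩ := isBounded_iff.1 hg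
  refine isBounded_iff.2 ⟨C + 2 * δ, ?_⟩
  rintro _ ⟨z, hz, rfl⟩ _ ⟨w, hw, rfl⟩
  linarith [(abs_sub_le_iff.1 (abs_dist_sub_dist_le_of_forall_dist_le hfg hz hw)).1,
    hC (Set.mem_image_of_mem g hz) (Set.mem_image_of_mem g hw)]

theorem diam_image_le_diam_image_add_of_forall_dist_le (hg : Bornology.IsBounded (g '' S))
    (hδ : 0 ≤ δ) (hfg : ∀ z ∈ S, dist (f z) (g z) ≤ δ) :
    diam (f '' S) ≤ diam (g '' S) + 2 * δ := by
  refine diam_le_of_forall_dist_le (by positivity) ?_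
  rintro _ ⟨z, hz, rfl⟩ _ ⟨w, hw, rfl⟩
  linarith [(abs_sub_le_iff.1 (abs_dist_sub_dist_le_of_forall_dist_le hfg hz hw)).1,
    dist_le_diam_of_mem hg (Set.mem_image_of_mem g hz) (Set.mem_image_of_mem g hw)]

end CloseMaps

namespace ContinuousAffineMap

variable {E F : Type*} [NormedAddCommGroup E] [NormedSpace ℝ E]
  [NormedAddCommGroup F] [NormedSpace ℝ F] (a : E →ᴬ[ℝ] F)

theorem dist_map_eq_norm_contLinear (z w : E) : dist (a z) (a w) = ‖a.contLinear (z - w)‖ := by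
  rw [dist_eq_norm, ← vsub_eq_sub, ← vsub_eq_sub, contLinear_map_vsub]

theorem dist_map_le_s11 (z w : E) : dist (a z) (a w) ≤ ‖a.contLinear‖ * dist z w := by
  rw [dist_map_eq_norm_contLinear, dist_eq_norm]
  exact a.contLinear.le_opNorm _

theorem lipschitzWith : LipschitzWith ‖a.contLinear‖₊ a :=
  LipschitzWith.of_dist_le_mul fun z w => by simpa only [coe_nnnorm] using a.dist_map_le_s11 z w

theorem isBounded_image_closedBall (x : E) (r : ℝ) :
    Bornology.IsBounded (a '' closedBall x r) :=
  a.lipschitzWith.isBounded_image isBounded_closedBall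

theorem diam_image_closedBall (x : E) {r : ℝ} (hr : 0 < r) :
    diam (a '' closedBall x r) = 2 * ‖a.contLinear‖ * r := by
  refine le_antisymm ?_ ?_
  · calc diam (a '' closedBall x r) ≤ ‖a.contLinear‖ * diam (closedBall x r) :=
          a.lipschitzWith.diam_image_le _ isBounded_closedBall
      _ ≤ ‖a.contLinear‖ * (2 * r) := by gcongr; exact diam_closedBall hr.le
      _ = 2 * ‖a.contLinear‖ * r := by ring
  · suffices ‖a.contLinear‖ ≤ diam (a '' closedBall x r) / (2 * r) by
      rw [le_div_iff₀ (by positivity)] at this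
      linarith
    refine a.contLinear.opNorm_le_of_unit_norm (by positivity) fun v hv => ?_
    have hmem : ∀ s : ℝ, |s| ≤ r → x + s • v ∈ closedBall x r := fun s hs => by
      simpa [norm_smul, hv] using hs
    have hspan : dist (a (x + r • v)) (a (x + (-r) • v)) = 2 * r * ‖a.contLinear v‖ := by
      rw [dist_map_eq_norm_contLinear, add_sub_add_left_eq_sub, ← sub_smul, map_smul, norm_smul,
        Real.norm_of_nonneg (by linarith)]
      ring
    rw [le_div_iff₀ (by positivity), mul_comm, ← hspan]
    exact dist_le_diam_of_mem (a.isBounded_image_closedBall x r)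
      (Set.mem_image_of_mem a (hmem r (abs_of_pos hr).le))
      (Set.mem_image_of_mem a (hmem (-r) (by rw [abs_neg, abs_of_pos hr])))

end ContinuousAffineMap

theorem sigmaMin_nonneg {n N : ℕ}
    (L : EuclideanSpace ℝ (Fin n) →L[ℝ] EuclideanSpace ℝ (Fin N)) : 0 ≤ sigmaMin L :=
  Real.sInf_nonneg fun _ ⟨_, _, hc⟩ => hc ▸ norm_nonneg _

theorem sigmaMin_mul_norm_le {n N : ℕ}
    (L : EuclideanSpace ℝ (Fin n) →L[ℝ] EuclideanSpace ℝ (Fin N)) (v : EuclideanSpace ℝ (Fin n)) :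
    sigmaMin L * ‖v‖ ≤ ‖L v‖ := by
  rcases eq_or_ne v 0 with rfl | hv
  · simp
  have hunit : ‖‖v‖⁻¹ • v‖ = 1 := by simp [norm_smul, hv]
  have hle : sigmaMin L ≤ ‖L (‖v‖⁻¹ • v)‖ :=
    csInf_le ⟨0, by rintro c ⟨u, -, rfl⟩; exact norm_nonneg _⟩ ⟨_, hunit, rfl⟩
  rwa [map_smul, norm_smul, norm_inv, norm_norm, ← div_eq_inv_mul,
    le_div_iff₀ (norm_pos_iff.2 hv)] at hle

theorem sigmaMin_contLinear_mul_dist_le {n N : ℕ}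
    (a : EuclideanSpace ℝ (Fin n) →ᴬ[ℝ] EuclideanSpace ℝ (Fin N)) (z w : EuclideanSpace ℝ (Fin n)) :
    sigmaMin a.contLinear * dist z w ≤ dist (a z) (a w) := by
  rw [a.dist_map_eq_norm_contLinear, dist_eq_norm]
  exact sigmaMin_mul_norm_le _ _

theorem almostAffine_diam_and_inradius_general (n N : ℕ)
    (f : EuclideanSpace ℝ (Fin n) → EuclideanSpace ℝ (Fin N))
    (x : EuclideanSpace ℝ (Fin n)) (r : ℝ) (hr : 0 < r)
    (A : EuclideanSpace ℝ (Fin n) → ℝ →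
      ContinuousAffineMap ℝ (EuclideanSpace ℝ (Fin n)) (EuclideanSpace ℝ (Fin N)))
    (ε t H : ℝ) (hε : 0 < ε) (ht0 : 0 < t) (hH : 1 ≤ H)
    (hfa : IsAlmostAffine n N f (closedBall x r) A ε)
    (hsv : ‖(A x r).contLinear‖ ≤ H * sigmaMin (A x r).contLinear)
    (hHt : H * (t + 2 * ε) ≤ 1) :
    (‖(A x r).contLinear‖ * r ≤ Metric.diam (f '' closedBall x r) ∧
      Metric.diam (f '' closedBall x r) ≤ 3 * ‖(A x r).contLinear‖ * r) ∧
    ∀ y : EuclideanSpace ℝ (Fin n), dist y x = r →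
      t * ‖(A x r).contLinear‖ * r ≤ dist (f x) (f y) ∧
      dist (f x) (f y) ≤ 2 * ‖(A x r).contLinear‖ * r := by
  set a := A x r
  have hx : x ∈ closedBall x r := mem_closedBall_self hr.le
  have hclose : ∀ z ∈ closedBall x r, dist (f z) (a z) ≤ ε * ‖a.contLinear‖ * r :=
    fun z hz => hfa.2 x hx r hr z ⟨hz, hz⟩
  have hδ : 0 ≤ ε * ‖a.contLinear‖ * r := by positivity
  have hε2 : 2 * ε ≤ 1 := by nlinarith
  have hσ : (t + 2 * ε) * ‖a.contLinear‖ ≤ sigmaMin a.contLinear := by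
    nlinarith [sigmaMin_nonneg a.contLinear]
  have hdiam := a.diam_image_closedBall x hr
  have hbdd := a.isBounded_image_closedBall x r
  refine ⟨⟨?_, ?_⟩, fun y hy => ?_⟩
  · have := diam_image_le_diam_image_add_of_forall_dist_le
      (isBounded_image_of_forall_dist_le hbdd hclose) hδ
      fun z hz => (dist_comm _ _).trans_le (hclose z hz)
    nlinarith
  · have := diam_image_le_diam_image_add_of_forall_dist_le hbdd hδ hclose
    nlinarith
  · obtain ⟨hlow, hup⟩ := abs_sub_le_iff.1
      (abs_dist_sub_dist_le_of_forall_dist_le hclose hx (mem_closedBall.2 hy.le))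
    have hlip := a.dist_map_le_s11 x y
    have hinj := sigmaMin_contLinear_mul_dist_le a x y
    rw [dist_comm x y, hy] at hlip hinj
    constructor <;> nlinarith

/-- Suppose `(f, B(x,r), A)` is `ε`-almost affine,
`λₙ(A'_{x,r}) ≤ H·λ₁(A'_{x,r})`, and `H(t + 2ε) ≤ 1` for some `0 < t < 1`. Then
`‖A'_{x,r}‖r ≤ diam f(B(x,r)) ≤ 3‖A'_{x,r}‖r`, and
`t‖A'_{x,r}‖r ≤ |f x − f y| ≤ 2‖A'_{x,r}‖r` for all `y` with `|y−x| = r`. -/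
theorem almostAffine_diam_and_inradius (n N : ℕ)
    (f : EuclideanSpace ℝ (Fin n) → EuclideanSpace ℝ (Fin N))
    (x : EuclideanSpace ℝ (Fin n)) (r : ℝ) (hr : 0 < r)
    (A : EuclideanSpace ℝ (Fin n) → ℝ →
      ContinuousAffineMap ℝ (EuclideanSpace ℝ (Fin n)) (EuclideanSpace ℝ (Fin N)))
    (ε t H : ℝ) (hε : 0 < ε) (ht0 : 0 < t) (ht1 : t < 1) (hH : 1 ≤ H)
    (hfa : IsAlmostAffine n N f (closedBall x r) A ε)
    (hsv : ‖(A x r).contLinear‖ ≤ H * sigmaMin (A x r).contLinear)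
    (hHt : H * (t + 2 * ε) ≤ 1) :
    (‖(A x r).contLinear‖ * r ≤ Metric.diam (f '' closedBall x r) ∧
      Metric.diam (f '' closedBall x r) ≤ 3 * ‖(A x r).contLinear‖ * r) ∧
    ∀ y : EuclideanSpace ℝ (Fin n), dist y x = r →
      t * ‖(A x r).contLinear‖ * r ≤ dist (f x) (f y) ∧
      dist (f x) (f y) ≤ 2 * ‖(A x r).contLinear‖ * r :=
  almostAffine_diam_and_inradius_general n N f x r hr A ε t H hε ht0 hH hfa hsv hHt
end

section
/- Suppose V is an n-dimensional affine plane in ℝᴺ (1 ≤ n ≤ N−1), v ∈ V, and e is a unit vector of ℝᴺ. For any topological embedding f : B(v,2r) → ℝᴺ, the beta number of the image satisfies β_{f(V)}( f(v), |f(v+re) − f(v)|/2 ) ≤ 72 N · (H_f(B(v,2r)) − 1). -/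
open Metric

/-- Uncentered Jones beta number. -/
noncomputable def beta (n N : ℕ) (E : Set (EuclideanSpace ℝ (Fin N)))
    (x : EuclideanSpace ℝ (Fin N)) (r : ℝ) : ℝ :=
  sInf {b : ℝ | ∃ V : AffineSubspace ℝ (EuclideanSpace ℝ (Fin N)),
    (V : Set (EuclideanSpace ℝ (Fin N))).Nonempty ∧
    Module.finrank ℝ V.direction = n ∧
    b = (1 / r) * ⨆ y : ↥(E ∩ closedBall x r),
      Metric.infDist (y : EuclideanSpace ℝ (Fin N)) (V : Set (EuclideanSpace ℝ (Fin N)))}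

/-!
Let `w₁, …, w_k` be an orthonormal basis of the orthogonal complement of `V` and put
`mᵢ = f (v + r wᵢ) - f (v - r wᵢ)`. If a point is equidistant from two others, weak
`H`-quasisymmetry forces its image to have squared distances to their images that differ by
`O(H - 1)`, and by polarization `⟪a - b, c - d⟫` is half a signed sum of four squared distances.
Hence the `mᵢ` are long compared to `D = |f (v + r e) - f v|` and almost orthogonal, and every
`f x - f v` with `x ∈ V` is almost orthogonal to all of them. A Gram-matrix bound then makes the
`mᵢ` span a `k`-dimensional space onto which `f x - f v` projects with norm `O(√k (H - 1) D)`, so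
the `n`-plane through `f v` orthogonal to the `mᵢ` witnesses the bound. When `72 N (H - 1) ≥ 1`
any `n`-plane through `f v` does.
-/

open scoped RealInnerProductSpace

section NormedSpace

variable {E : Type*} [NormedAddCommGroup E] [NormedSpace ℝ E] {v w : E} {r : ℝ}

theorem dist_add_smul_self (hr : 0 ≤ r) (hw : ‖w‖ = 1) : dist (v + r • w) v = r := by
  rw [dist_self_add_left, norm_smul, hw, mul_one, Real.norm_of_nonneg hr]

theorem dist_sub_smul_self (hr : 0 ≤ r) (hw : ‖w‖ = 1) : dist (v - r • w) v = r := by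
  rw [dist_self_sub_left, norm_smul, hw, mul_one, Real.norm_of_nonneg hr]

theorem dist_sub_smul_add_smul (hr : 0 ≤ r) (hw : ‖w‖ = 1) :
    dist (v - r • w) (v + r • w) = 2 * r := by
  rw [dist_eq_norm, show v - r • w - (v + r • w) = (-(2 * r)) • w by module, norm_smul, hw,
    mul_one, norm_neg, Real.norm_of_nonneg (by positivity)]

end NormedSpace

theorem abs_sq_sub_sq_le_of_le_mul {a b H M : ℝ} (ha : 0 ≤ a) (hb : 0 ≤ b) (hH : 1 ≤ H)
    (hab : a ≤ H * b) (hba : b ≤ H * a) (haM : a ≤ M) (hbM : b ≤ M) :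
    |a ^ 2 - b ^ 2| ≤ (H ^ 2 - 1) * M ^ 2 := by
  have hH2 : 0 ≤ H ^ 2 - 1 := by nlinarith
  have ha2 := pow_le_pow_left₀ ha hab 2
  have hb2 := pow_le_pow_left₀ hb hba 2
  have haM2 := pow_le_pow_left₀ ha haM 2
  have hbM2 := pow_le_pow_left₀ hb hbM 2
  rw [abs_le]
  constructor <;>
    nlinarith [mul_le_mul_of_nonneg_left haM2 hH2, mul_le_mul_of_nonneg_left hbM2 hH2]

section InnerProductSpace

variable {E : Type*} [NormedAddCommGroup E] [InnerProductSpace ℝ E]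

theorem inner_sub_sub_eq_dist_sq (x y z w : E) :
    ⟪x - y, z - w⟫ = (dist x w ^ 2 - dist x z ^ 2 + (dist y z ^ 2 - dist y w ^ 2)) / 2 := by
  simp only [dist_eq_norm, norm_sub_sq_real, inner_sub_left, inner_sub_right]
  ring

theorem abs_real_inner_inv_norm_smul_le {w m : E} {a b C : ℝ} (ha : 0 < a) (hm : a ≤ b * ‖m‖)
    (h : |⟪w, m⟫| ≤ C * a) : |⟪w, ‖m‖⁻¹ • m⟫| ≤ C * b := by
  have hC : 0 ≤ C := nonneg_of_mul_nonneg_left ((abs_nonneg _).trans h) ha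
  have hm0 : 0 < ‖m‖ := norm_pos_iff.2 fun h0 => by simp [h0] at hm; linarith
  rw [real_inner_smul_right, abs_mul, abs_inv, abs_norm, inv_mul_le_iff₀ hm0]
  nlinarith [mul_le_mul_of_nonneg_left hm hC]

theorem dist_add_eq_dist_sub_of_inner_eq_zero {x v w : E} (h : ⟪x - v, w⟫ = 0) :
    dist (v + w) x = dist (v - w) x := by
  rw [dist_eq_norm, dist_eq_norm, show v + w - x = w - (x - v) by abel,
    show v - w - x = -(w + (x - v)) by abel, norm_neg]
  exact norm_sub_eq_norm_add h

end InnerProductSpace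

section AlmostOrthonormal

open Finset

variable {E : Type*} [NormedAddCommGroup E] [InnerProductSpace ℝ E] {ι : Type*} [Fintype ι]
  {u : ι → E} {ε : ℝ}

theorem mul_sum_sq_le_norm_sum_smul_sq (hu : ∀ i, ‖u i‖ = 1) (hε : 0 ≤ ε)
    (hu_inner : Pairwise fun i j => |⟪u i, u j⟫| ≤ ε) (c : ι → ℝ) :
    (1 - (Fintype.card ι - 1) * ε) * ∑ i, c i ^ 2 ≤ ‖∑ i, c i • u i‖ ^ 2 := by
  classical
  have hexpand : ‖∑ i, c i • u i‖ ^ 2 = ∑ i, ∑ j, c i * c j * ⟪u i, u j⟫ := by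
    simp only [← real_inner_self_eq_norm_sq, sum_inner, inner_sum, real_inner_smul_left,
      real_inner_smul_right, mul_assoc]
    exact sum_congr rfl fun i _ => sum_congr rfl fun j _ => by rw [real_inner_comm]
  have hterm : ∀ i j, (if i = j then c i ^ 2 else 0) * (1 + ε) - ε * (|c i| * |c j|)
      ≤ c i * c j * ⟪u i, u j⟫ := by
    intro i j
    split_ifs with hij
    · subst hij
      rw [real_inner_self_eq_norm_sq, hu, abs_mul_abs_self]
      exact le_of_eq (by ring)
    · have h := abs_le.1 ((abs_mul _ _).trans_le
        (mul_le_mul_of_nonneg_left (hu_inner hij) (abs_nonneg (c i * c j))))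
      rw [abs_mul] at h
      linarith [h.1]
  have hcs : (∑ i, |c i|) ^ 2 ≤ Fintype.card ι * ∑ i, c i ^ 2 := by
    simpa only [sq_abs, card_univ] using
      sq_sum_le_card_mul_sum_sq (s := univ) (f := fun i => |c i|)
  have hsum := sum_le_sum fun i (_ : i ∈ univ) => sum_le_sum fun j (_ : j ∈ univ) => hterm i j
  simp only [sum_sub_distrib, ← sum_mul, sum_ite_eq, mem_univ, if_true, ← mul_sum,
    ← sq] at hsum
  rw [hexpand]
  nlinarith [mul_le_mul_of_nonneg_left hcs hε]

theorem linearIndependent_of_almost_orthonormal (hu : ∀ i, ‖u i‖ = 1) (hε : 0 ≤ ε)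
    (hu_inner : Pairwise fun i j => |⟪u i, u j⟫| ≤ ε) (hsmall : (Fintype.card ι - 1) * ε < 1) :
    LinearIndependent ℝ u := by
  rw [Fintype.linearIndependent_iff]
  intro c hc
  have h := mul_sum_sq_le_norm_sum_smul_sq hu hε hu_inner c
  rw [hc, norm_zero, zero_pow two_ne_zero] at h
  have hsum : ∑ i, c i ^ 2 = 0 :=
    le_antisymm (nonpos_of_mul_nonpos_right h (by linarith)) (sum_nonneg fun i _ => sq_nonneg _)
  intro i
  exact pow_eq_zero_iff two_ne_zero |>.1
    ((sum_eq_zero_iff_of_nonneg fun j _ => sq_nonneg _).1 hsum i (mem_univ i))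

theorem norm_starProjection_span_le [FiniteDimensional ℝ E] (hu : ∀ i, ‖u i‖ = 1)
    (hε : 0 ≤ ε) (hu_inner : Pairwise fun i j => |⟪u i, u j⟫| ≤ ε)
    (hsmall : (Fintype.card ι - 1) * ε ≤ 3 / 4)
    {w : E} {η : ℝ} (hη : 0 ≤ η) (hw : ∀ i, |⟪w, u i⟫| ≤ η) :
    ‖(Submodule.span ℝ (Set.range u)).starProjection w‖ ≤ 2 * √(Fintype.card ι) * η := by
  set K := Submodule.span ℝ (Set.range u)
  obtain ⟨c, hc⟩ :=
    (Submodule.mem_span_range_iff_exists_fun ℝ).1 (K.starProjection_apply_mem w)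
  set p := K.starProjection w
  have hp : ‖p‖ ^ 2 = ⟪w, p⟫ := by
    have h : ⟪w - p, p⟫ = 0 := K.starProjection_inner_eq_zero w p (K.starProjection_apply_mem w)
    rw [inner_sub_left, real_inner_self_eq_norm_sq] at h
    linarith
  have hinner : ⟪w, p⟫ ≤ η * ∑ i, |c i| := by
    rw [← hc, inner_sum, mul_sum]
    refine sum_le_sum fun i _ => ?_
    rw [real_inner_smul_right, mul_comm η]
    exact (le_abs_self _).trans ((abs_mul _ _).trans_le
      (mul_le_mul_of_nonneg_left (hw i) (abs_nonneg _)))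
  have hgram : ∑ i, c i ^ 2 ≤ 4 * ‖p‖ ^ 2 := by
    have h := mul_sum_sq_le_norm_sum_smul_sq hu hε hu_inner c
    rw [hc] at h
    nlinarith [sum_nonneg fun i (_ : i ∈ univ) => sq_nonneg (c i)]
  have hcoeff : ∑ i, |c i| ≤ 2 * √(Fintype.card ι) * ‖p‖ := by
    refine le_of_pow_le_pow_left₀ two_ne_zero (by positivity) ?_
    have hcs : (∑ i, |c i|) ^ 2 ≤ Fintype.card ι * ∑ i, c i ^ 2 := by
      simpa only [sq_abs, card_univ] using
        sq_sum_le_card_mul_sum_sq (s := univ) (f := fun i => |c i|)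
    rw [mul_pow, mul_pow, Real.sq_sqrt (Nat.cast_nonneg _)]
    nlinarith [Nat.cast_nonneg (α := ℝ) (Fintype.card ι)]
  have hpp : ‖p‖ * ‖p‖ ≤ 2 * √(Fintype.card ι) * η * ‖p‖ := by
    nlinarith [mul_le_mul_of_nonneg_left hcoeff hη]
  rcases (norm_nonneg p).eq_or_lt with h0 | h0
  · rw [← h0]; positivity
  · exact le_of_mul_le_mul_right hpp h0

end AlmostOrthonormal

/-- `IsWeaklyQuasisymmetricOn f s H` says `H_f(s) ≤ H`. -/
def IsWeaklyQuasisymmetricOn {X Y : Type*} [PseudoMetricSpace X] [PseudoMetricSpace Y]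
    (f : X → Y) (s : Set X) (H : ℝ) : Prop :=
  ∀ p ∈ s, ∀ q ∈ s, ∀ a ∈ s, dist p a ≤ dist q a → dist (f p) (f a) ≤ H * dist (f q) (f a)

namespace IsWeaklyQuasisymmetricOn

section Metric

variable {X Y : Type*} [PseudoMetricSpace X] [PseudoMetricSpace Y] {f : X → Y} {s : Set X}
  {H : ℝ}

theorem one_le (hf : IsWeaklyQuasisymmetricOn f s H) {p a : X} (hp : p ∈ s) (ha : a ∈ s)
    (hfpa : 0 < dist (f p) (f a)) : 1 ≤ H :=
  le_of_mul_le_mul_right (by simpa using hf p hp p hp a ha le_rfl) hfpa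

theorem abs_sq_dist_sub_sq_dist_le (hf : IsWeaklyQuasisymmetricOn f s H) (hH : 1 ≤ H)
    {p q a : X} (hp : p ∈ s) (hq : q ∈ s) (ha : a ∈ s) (hpq : dist p a = dist q a) {M : ℝ}
    (hpM : dist (f p) (f a) ≤ M) (hqM : dist (f q) (f a) ≤ M) :
    |dist (f p) (f a) ^ 2 - dist (f q) (f a) ^ 2| ≤ (H ^ 2 - 1) * M ^ 2 :=
  abs_sq_sub_sq_le_of_le_mul dist_nonneg dist_nonneg hH (hf p hp q hq a ha hpq.le)
    (hf q hq p hp a ha hpq.ge) hpM hqM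

theorem dist_image_le_of_dist_eq {v z₀ z : X} {r : ℝ}
    (hf : IsWeaklyQuasisymmetricOn f (closedBall v (2 * r)) H) (hr : 0 ≤ r)
    (hz₀ : dist z₀ v = r) (hz : dist z v = r) :
    dist (f z) (f v) ≤ H * dist (f z₀) (f v) :=
  hf z (mem_closedBall.2 (by linarith)) z₀ (mem_closedBall.2 (by linarith)) v
    (mem_closedBall_self (by linarith)) (hz.trans hz₀.symm).le

theorem dist_image_le_two_mul {v z₀ z z' : X} {r : ℝ}
    (hf : IsWeaklyQuasisymmetricOn f (closedBall v (2 * r)) H) (hr : 0 ≤ r)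
    (hz₀ : dist z₀ v = r) (hz : dist z v = r) (hz' : dist z' v = r) :
    dist (f z) (f z') ≤ 2 * H * dist (f z₀) (f v) := by
  linarith [dist_triangle_right (f z) (f z') (f v), hf.dist_image_le_of_dist_eq hr hz₀ hz,
    hf.dist_image_le_of_dist_eq hr hz₀ hz']

end Metric

theorem abs_inner_sub_sub_le {X F : Type*} [PseudoMetricSpace X] [NormedAddCommGroup F]
    [InnerProductSpace ℝ F] {f : X → F} {s : Set X} {H : ℝ}
    (hf : IsWeaklyQuasisymmetricOn f s H) (hH : 1 ≤ H) {a b c d : X}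
    (ha : a ∈ s) (hb : b ∈ s) (hc : c ∈ s) (hd : d ∈ s)
    (ha_eq : dist c a = dist d a) (hb_eq : dist c b = dist d b) {M₁ M₂ : ℝ}
    (hca : dist (f c) (f a) ≤ M₁) (hda : dist (f d) (f a) ≤ M₁)
    (hcb : dist (f c) (f b) ≤ M₂) (hdb : dist (f d) (f b) ≤ M₂) :
    |⟪f a - f b, f c - f d⟫| ≤ (H ^ 2 - 1) * (M₁ ^ 2 + M₂ ^ 2) / 2 := by
  have h₁ := hf.abs_sq_dist_sub_sq_dist_le hH hd hc ha ha_eq.symm hda hca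
  have h₂ := hf.abs_sq_dist_sub_sq_dist_le hH hc hd hb hb_eq hcb hdb
  rw [inner_sub_sub_eq_dist_sq, dist_comm (f a), dist_comm (f a), dist_comm (f b),
    dist_comm (f b), abs_div, abs_two]
  linarith [abs_add_le (dist (f d) (f a) ^ 2 - dist (f c) (f a) ^ 2)
    (dist (f c) (f b) ^ 2 - dist (f d) (f b) ^ 2)]

section Antipodal

variable {E F : Type*} [NormedAddCommGroup E] [NormedAddCommGroup F] {f : E → F} {v w z₀ : E}
  {r H : ℝ}

theorem le_sq_mul_norm_antipodal_sub [NormedSpace ℝ E]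
    (hf : IsWeaklyQuasisymmetricOn f (closedBall v (2 * r)) H)
    (hr : 0 ≤ r) (hz₀ : dist z₀ v = r) (hH : 0 ≤ H) (hw : ‖w‖ = 1) :
    dist (f z₀) (f v) ≤ H ^ 2 * ‖f (v + r • w) - f (v - r • w)‖ := by
  have hp := dist_add_smul_self (v := v) hr hw
  have hq := dist_sub_smul_self (v := v) hr hw
  have hvp : dist (f v) (f (v + r • w)) ≤ H * dist (f (v - r • w)) (f (v + r • w)) :=
    hf v (mem_closedBall_self (by linarith)) _ (mem_closedBall.2 (by linarith)) _
      (mem_closedBall.2 (by linarith))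
      (by rw [dist_comm, hp, dist_sub_smul_add_smul hr hw]; linarith)
  calc dist (f z₀) (f v) ≤ H * dist (f (v + r • w)) (f v) :=
        hf.dist_image_le_of_dist_eq hr hp hz₀
    _ ≤ H * (H * ‖f (v + r • w) - f (v - r • w)‖) := by
        rw [dist_comm, ← dist_eq_norm, dist_comm (f (v + r • w))]
        exact mul_le_mul_of_nonneg_left hvp hH
    _ = H ^ 2 * ‖f (v + r • w) - f (v - r • w)‖ := by ring

theorem abs_inner_antipodal_sub_le [InnerProductSpace ℝ E] [InnerProductSpace ℝ F]
    (hf : IsWeaklyQuasisymmetricOn f (closedBall v (2 * r)) H)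
    (hr : 0 ≤ r) (hz₀ : dist z₀ v = r) (hH : 1 ≤ H) {w' : E} (hw : ‖w‖ = 1) (hw' : ‖w'‖ = 1)
    (hww' : ⟪w, w'⟫ = 0) :
    |⟪f (v + r • w) - f (v - r • w), f (v + r • w') - f (v - r • w')⟫|
      ≤ (H ^ 2 - 1) * (2 * H * dist (f z₀) (f v)) ^ 2 := by
  have hp := dist_add_smul_self (v := v) hr hw
  have hq := dist_sub_smul_self (v := v) hr hw
  have hp' := dist_add_smul_self (v := v) hr hw'
  have hq' := dist_sub_smul_self (v := v) hr hw'
  have hmem : ∀ z, dist z v = r → z ∈ closedBall v (2 * r) :=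
    fun z hz => mem_closedBall.2 (by linarith)
  refine (hf.abs_inner_sub_sub_le hH (hmem _ hp) (hmem _ hq) (hmem _ hp') (hmem _ hq')
    (dist_add_eq_dist_sub_of_inner_eq_zero ?_) (dist_add_eq_dist_sub_of_inner_eq_zero ?_)
    (hf.dist_image_le_two_mul hr hz₀ hp' hp) (hf.dist_image_le_two_mul hr hz₀ hq' hp)
    (hf.dist_image_le_two_mul hr hz₀ hp' hq) (hf.dist_image_le_two_mul hr hz₀ hq' hq)).trans_eq
    (by ring)
  · rw [add_sub_cancel_left, real_inner_smul_left, real_inner_smul_right, hww', mul_zero,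
      mul_zero]
  · rw [sub_sub_cancel_left, inner_neg_left, real_inner_smul_left, real_inner_smul_right, hww',
      mul_zero, mul_zero, neg_zero]

theorem abs_inner_sub_antipodal_sub_le [InnerProductSpace ℝ E] [InnerProductSpace ℝ F]
    (hf : IsWeaklyQuasisymmetricOn f (closedBall v (2 * r)) H)
    (hr : 0 ≤ r) (hz₀ : dist z₀ v = r) (hH : 1 ≤ H) (hw : ‖w‖ = 1) {x : E}
    (hx : x ∈ closedBall v (2 * r)) (hxw : ⟪x - v, w⟫ = 0) {ρ : ℝ}
    (hρ : dist (f x) (f v) ≤ ρ) :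
    |⟪f x - f v, f (v + r • w) - f (v - r • w)⟫|
      ≤ (H ^ 2 - 1) * ((ρ + H * dist (f z₀) (f v)) ^ 2 + (H * dist (f z₀) (f v)) ^ 2) / 2 := by
  have hp := dist_add_smul_self (v := v) hr hw
  have hq := dist_sub_smul_self (v := v) hr hw
  have hpv := hf.dist_image_le_of_dist_eq hr hz₀ hp
  have hqv := hf.dist_image_le_of_dist_eq hr hz₀ hq
  refine hf.abs_inner_sub_sub_le hH hx (mem_closedBall_self (by linarith))
    (mem_closedBall.2 (by linarith)) (mem_closedBall.2 (by linarith))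
    (dist_add_eq_dist_sub_of_inner_eq_zero (by rw [inner_smul_right, hxw, mul_zero]))
    (dist_add_eq_dist_sub_of_inner_eq_zero (by rw [sub_self, inner_zero_left]))
    ?_ ?_ hpv hqv
  · linarith [dist_triangle_right (f (v + r • w)) (f x) (f v)]
  · linarith [dist_triangle_right (f (v - r • w)) (f x) (f v)]

end Antipodal

end IsWeaklyQuasisymmetricOn

section Beta

variable {n N : ℕ} {Y : Set (EuclideanSpace ℝ (Fin N))} {x : EuclideanSpace ℝ (Fin N)} {s : ℝ}

theorem beta_le_of_forall_infDist_le (hs : 0 < s)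
    (W : AffineSubspace ℝ (EuclideanSpace ℝ (Fin N)))
    (hW : (W : Set (EuclideanSpace ℝ (Fin N))).Nonempty)
    (hWn : Module.finrank ℝ W.direction = n) {c : ℝ} (hc : 0 ≤ c)
    (h : ∀ y ∈ Y ∩ closedBall x s, infDist y (W : Set (EuclideanSpace ℝ (Fin N))) ≤ c * s) :
    beta n N Y x s ≤ c := by
  refine csInf_le_of_le ⟨0, ?_⟩ ⟨W, hW, hWn, rfl⟩ ?_
  · rintro b ⟨W', -, -, rfl⟩
    exact mul_nonneg (by positivity) (Real.iSup_nonneg fun y => infDist_nonneg)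
  · rw [one_div, inv_mul_le_iff₀ hs]
    exact Real.iSup_le (fun y => (h y y.2).trans_eq (mul_comm _ _)) (by positivity)

theorem beta_le_one (hs : 0 < s) (K : Submodule ℝ (EuclideanSpace ℝ (Fin N)))
    (hK : Module.finrank ℝ K = n) : beta n N Y x s ≤ 1 :=
  beta_le_of_forall_infDist_le hs (AffineSubspace.mk' x K)
    ⟨x, AffineSubspace.self_mem_mk' _ _⟩ (by rwa [AffineSubspace.direction_mk']) zero_le_one
    fun y hy => (infDist_le_dist_of_mem (AffineSubspace.self_mem_mk' _ _)).trans
      (by simpa using hy.2)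

theorem beta_le_of_abs_inner_le (hs : 0 < s) {ι : Type*} [Fintype ι]
    {u : ι → EuclideanSpace ℝ (Fin N)} {ε : ℝ} (hu : ∀ i, ‖u i‖ = 1) (hε : 0 ≤ ε)
    (hu_inner : Pairwise fun i j => |⟪u i, u j⟫| ≤ ε)
    (hsmall : (Fintype.card ι - 1) * ε ≤ 3 / 4) (hdim : n + Fintype.card ι = N)
    {η : ℝ} (hη : 0 ≤ η) (hY : ∀ y ∈ Y ∩ closedBall x s, ∀ i, |⟪y - x, u i⟫| ≤ η * s) :
    beta n N Y x s ≤ 2 * √(Fintype.card ι) * η := by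
  set K := Submodule.span ℝ (Set.range u)
  have hK : Module.finrank ℝ K = Fintype.card ι :=
    finrank_span_eq_card (linearIndependent_of_almost_orthonormal hu hε hu_inner (by linarith))
  have hKperp : Module.finrank ℝ Kᗮ = n := by
    have h := K.finrank_add_finrank_orthogonal
    rw [hK, finrank_euclideanSpace_fin] at h
    omega
  refine beta_le_of_forall_infDist_le hs (AffineSubspace.mk' x Kᗮ)
    ⟨x, AffineSubspace.self_mem_mk' _ _⟩ (by rwa [AffineSubspace.direction_mk'])
    (by positivity) fun y hy => ?_
  have hproj : y - K.starProjection (y - x) ∈ AffineSubspace.mk' x Kᗮ := by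
    rw [AffineSubspace.mem_mk', vsub_eq_sub, sub_right_comm]
    exact K.sub_starProjection_mem_orthogonal _
  calc infDist y (AffineSubspace.mk' x Kᗮ) ≤ dist y (y - K.starProjection (y - x)) :=
        infDist_le_dist_of_mem hproj
    _ = ‖K.starProjection (y - x)‖ := by rw [dist_eq_norm, sub_sub_cancel]
    _ ≤ 2 * √(Fintype.card ι) * (η * s) :=
        norm_starProjection_span_le hu hε hu_inner hsmall (by positivity) (hY y hy)
    _ = 2 * √(Fintype.card ι) * η * s := by ring

end Beta

theorem beta_image_le {n N : ℕ} {f : EuclideanSpace ℝ (Fin N) → EuclideanSpace ℝ (Fin N)}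
    {V : AffineSubspace ℝ (EuclideanSpace ℝ (Fin N))} {v z₀ : EuclideanSpace ℝ (Fin N)}
    {r H : ℝ} (hf : IsWeaklyQuasisymmetricOn f (closedBall v (2 * r)) H) (hH : 1 ≤ H)
    (hr : 0 ≤ r) (hv : v ∈ V) (hz₀ : dist z₀ v = r) (hD : 0 < dist (f z₀) (f v))
    {ι : Type*} [Fintype ι] {w : ι → EuclideanSpace ℝ (Fin N)} (hw : Orthonormal ℝ w)
    (hwV : ∀ i, w i ∈ V.directionᗮ) (hdim : n + Fintype.card ι = N)
    (hsmall : (Fintype.card ι - 1) * (4 * (H ^ 2 - 1) * H ^ 6) ≤ 3 / 4) :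
    beta n N (f '' (V ∩ closedBall v (2 * r))) (f v) (dist (f z₀) (f v) / 2)
      ≤ 2 * √(Fintype.card ι) * ((H ^ 2 - 1) * H ^ 2 * ((1 / 2 + H) ^ 2 + H ^ 2)) := by
  set D := dist (f z₀) (f v)
  set m := fun i => f (v + r • w i) - f (v - r • w i)
  have hm : ∀ i, D ≤ H ^ 2 * ‖m i‖ :=
    fun i => hf.le_sq_mul_norm_antipodal_sub hr hz₀ (by linarith) (hw.1 i)
  have hm0 : ∀ i, m i ≠ 0 := fun i h0 => by
    have := hm i
    rw [h0, norm_zero, mul_zero] at this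
    linarith
  have hH2 : 0 ≤ H ^ 2 - 1 := by nlinarith
  refine beta_le_of_abs_inner_le (by positivity) (u := fun i => ‖m i‖⁻¹ • m i)
    (fun i => norm_smul_inv_norm (hm0 i)) (by positivity) (fun i j hij => ?_) hsmall hdim
    (by positivity) ?_
  · have hji := hf.abs_inner_antipodal_sub_le hr hz₀ hH (hw.1 j) (hw.1 i) (hw.2 hij.symm)
    have hji' : |⟪‖m i‖⁻¹ • m i, m j⟫| ≤ 4 * (H ^ 2 - 1) * H ^ 4 * D := by
      rw [real_inner_comm]
      exact (abs_real_inner_inv_norm_smul_le hD (hm i) (C := 4 * (H ^ 2 - 1) * H ^ 2 * D)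
        (hji.trans_eq (by ring))).trans_eq (by ring)
    exact (abs_real_inner_inv_norm_smul_le hD (hm j) hji').trans_eq (by ring)
  · rintro _ ⟨⟨x, ⟨hxV, hxB⟩, rfl⟩, hy⟩ i
    have hxw : ⟪x - v, w i⟫ = 0 :=
      (Submodule.mem_orthogonal _ _).1 (hwV i) _ (AffineSubspace.vsub_mem_direction hxV hv)
    have hxi := hf.abs_inner_sub_antipodal_sub_le hr hz₀ hH (hw.1 i) hxB hxw (mem_closedBall.1 hy)
    exact (abs_real_inner_inv_norm_smul_le hD (hm i)
      (C := (H ^ 2 - 1) * ((1 / 2 + H) ^ 2 + H ^ 2) * D / 2) (hxi.trans_eq (by ring))).trans_eq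
      (by ring)

theorem beta_image_le_of_mul_sub_one_lt {n N : ℕ}
    {f : EuclideanSpace ℝ (Fin N) → EuclideanSpace ℝ (Fin N)}
    {V : AffineSubspace ℝ (EuclideanSpace ℝ (Fin N))} (hV : Module.finrank ℝ V.direction = n)
    {v z₀ : EuclideanSpace ℝ (Fin N)} {r H : ℝ}
    (hf : IsWeaklyQuasisymmetricOn f (closedBall v (2 * r)) H) (hH : 1 ≤ H) (hr : 0 ≤ r)
    (hv : v ∈ V) (hz₀ : dist z₀ v = r) (hD : 0 < dist (f z₀) (f v))
    (hc : 72 * N * (H - 1) < 1) :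
    beta n N (f '' (V ∩ closedBall v (2 * r))) (f v) (dist (f z₀) (f v) / 2)
      ≤ 72 * N * (H - 1) := by
  set K := V.directionᗮ
  have hdim : n + Module.finrank ℝ K = N := by
    rw [← hV, V.direction.finrank_add_finrank_orthogonal, finrank_euclideanSpace_fin]
  have hN : (1 : ℝ) ≤ N := by
    have : Nontrivial (EuclideanSpace ℝ (Fin N)) := ⟨z₀, v, fun h => by simp [h] at hD⟩
    have := Module.finrank_pos (R := ℝ) (M := EuclideanSpace ℝ (Fin N))
    rw [finrank_euclideanSpace_fin] at this
    exact_mod_cast this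
  have hk : (Module.finrank ℝ K : ℝ) ≤ N := by exact_mod_cast (by omega : Module.finrank ℝ K ≤ N)
  have hsqrt : √(Module.finrank ℝ K : ℝ) ≤ N :=
    (Real.sqrt_le_sqrt hk).trans (Real.sqrt_le_self_iff.2 (Or.inr hN))
  have hδ : 0 ≤ H - 1 := by linarith
  have hH2 : 0 ≤ H ^ 2 - 1 := by nlinarith
  have hH' : H ≤ 21 / 20 := by nlinarith
  have hε : 4 * (H ^ 2 - 1) * H ^ 6 ≤ 12 * (H - 1) :=
    calc 4 * (H ^ 2 - 1) * H ^ 6 = 4 * (H - 1) * ((H + 1) * H ^ 6) := by ring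
      _ ≤ 4 * (H - 1) * ((21 / 20 + 1) * (21 / 20) ^ 6) := by gcongr
      _ ≤ 12 * (H - 1) := by linarith
  have hη : (H ^ 2 - 1) * H ^ 2 * ((1 / 2 + H) ^ 2 + H ^ 2) ≤ 36 * (H - 1) :=
    calc (H ^ 2 - 1) * H ^ 2 * ((1 / 2 + H) ^ 2 + H ^ 2)
        = (H - 1) * ((H + 1) * H ^ 2 * ((1 / 2 + H) ^ 2 + H ^ 2)) := by ring
      _ ≤ (H - 1) * ((21 / 20 + 1) * (21 / 20) ^ 2 * ((1 / 2 + 21 / 20) ^ 2 + (21 / 20) ^ 2)) := by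
          gcongr
      _ ≤ 36 * (H - 1) := by linarith
  refine (beta_image_le hf hH hr hv hz₀ hD
    ((stdOrthonormalBasis ℝ K).orthonormal.comp_linearIsometry K.subtypeₗᵢ)
    (fun i => ((stdOrthonormalBasis ℝ K) i).2) (by rwa [Fintype.card_fin]) ?_).trans ?_
  · rw [Fintype.card_fin]
    nlinarith [mul_le_mul_of_nonneg_right hk (by positivity : 0 ≤ 4 * (H ^ 2 - 1) * H ^ 6)]
  · rw [Fintype.card_fin]
    nlinarith [mul_le_mul hsqrt hη (by positivity) (by linarith : (0 : ℝ) ≤ N)]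

theorem beta_image_of_plane_le_weak_quasisymmetry_general (n N : ℕ)
    (V : AffineSubspace ℝ (EuclideanSpace ℝ (Fin N)))
    (hV : Module.finrank ℝ V.direction = n)
    (v : EuclideanSpace ℝ (Fin N)) (hv : v ∈ V)
    (e : EuclideanSpace ℝ (Fin N)) (he : ‖e‖ = 1)
    (r : ℝ) (hr : 0 < r)
    (f : EuclideanSpace ℝ (Fin N) → EuclideanSpace ℝ (Fin N))
    (hemb : Topology.IsEmbedding ((Metric.closedBall v (2 * r)).restrict f))
    (H : ℝ)
    (hH : ∀ p ∈ closedBall v (2 * r), ∀ q ∈ closedBall v (2 * r), ∀ a ∈ closedBall v (2 * r),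
      dist p a ≤ dist q a → dist (f p) (f a) ≤ H * dist (f q) (f a)) :
    beta n N (f '' ((V : Set (EuclideanSpace ℝ (Fin N))) ∩ closedBall v (2 * r)))
        (f v) (dist (f (v + r • e)) (f v) / 2) ≤ 72 * N * (H - 1) := by
  have hre : dist (v + r • e) v = r := dist_add_smul_self hr.le he
  have hre_mem : v + r • e ∈ closedBall v (2 * r) := mem_closedBall.2 (by linarith)
  have hv_mem : v ∈ closedBall v (2 * r) := mem_closedBall_self (by linarith)
  have hD : 0 < dist (f (v + r • e)) (f v) := by
    refine dist_pos.2 fun h => hr.ne' ?_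
    have h' : v + r • e = v :=
      congrArg Subtype.val (hemb.injective (a₁ := ⟨_, hre_mem⟩) (a₂ := ⟨_, hv_mem⟩) h)
    rw [← hre, h', dist_self]
  have hH1 : 1 ≤ H := IsWeaklyQuasisymmetricOn.one_le hH hre_mem hv_mem hD
  rcases le_or_gt 1 (72 * N * (H - 1)) with hc | hc
  · exact (beta_le_one (half_pos hD) V.direction hV).trans hc
  · exact beta_image_le_of_mul_sub_one_lt hV hH hH1 hr.le hv hre hD hc

/-- Let `V` be an `n`-dimensional affine plane in `ℝᴺ` (`1 ≤ n ≤ N−1`),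
`v ∈ V`, and `e` a unit vector. For any topological embedding `f : B(v,2r) → ℝᴺ` whose weak
quasisymmetry constant on `B(v,2r)` is at most `H`,
`β_{f(V)}(f v, |f(v+re) − f v|/2) ≤ 72 N (H − 1)`. -/
theorem beta_image_of_plane_le_weak_quasisymmetry (n N : ℕ) (hn : 1 ≤ n) (hnN : n ≤ N - 1)
    (V : AffineSubspace ℝ (EuclideanSpace ℝ (Fin N)))
    (hV : Module.finrank ℝ V.direction = n)
    (v : EuclideanSpace ℝ (Fin N)) (hv : v ∈ V)
    (e : EuclideanSpace ℝ (Fin N)) (he : ‖e‖ = 1)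
    (r : ℝ) (hr : 0 < r)
    (f : EuclideanSpace ℝ (Fin N) → EuclideanSpace ℝ (Fin N))
    (hemb : Topology.IsEmbedding ((Metric.closedBall v (2 * r)).restrict f))
    (H : ℝ)
    (hH : ∀ p ∈ closedBall v (2 * r), ∀ q ∈ closedBall v (2 * r), ∀ a ∈ closedBall v (2 * r),
      dist p a ≤ dist q a → dist (f p) (f a) ≤ H * dist (f q) (f a)) :
    beta n N (f '' ((V : Set (EuclideanSpace ℝ (Fin N))) ∩ closedBall v (2 * r)))
        (f v) (dist (f (v + r • e)) (f v) / 2) ≤ 72 * N * (H - 1) :=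
  beta_image_of_plane_le_weak_quasisymmetry_general n N V hV v hv e he r hr f hemb H hH
end
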